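/- For q > 0 with q ≠ 1, real k > 0, integers n_{j-1}, n_j, n_{j+1} ≥ 0, the ASIP rates c_j^+(η) = q^{n_j + k_j − n_{j+1} − 1} [n_j]_q [n_{j+1} + k_{j+1}]_q and c_{j+1}^-(η) = q^{−(n_{j+1} + k_{j+1} − n_j − 1)} [n_{j+1}]_q [n_j + k_j]_q satisfy the particle-hole symmetry c_j^+(q, −η − k) = c_{j+1}^-(q^{-1}, η), where −η − k denotes the configuration obtained by replacing each n_i by −n_i − k_i, and [a]_q = (q^a − q^{-a})/(q − q^{-1}). -/
import Mathlib


/-- The q-number `[a]_q = (q^a − q^{−a})/(q − q⁻¹)` for real `a`. -/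
noncomputable def qNum (q a : ℝ) : ℝ := (q ^ a - q ^ (-a)) / (q - q⁻¹)

lemma qNum_inv (q a : ℝ) (hq : 0 < q) : qNum q⁻¹ a = qNum q a := by
  unfold qNum
  rw [Real.inv_rpow hq.le, Real.inv_rpow hq.le, Real.rpow_neg hq.le, inv_inv, inv_inv,
    show (q ^ a)⁻¹ - q ^ a = -(q ^ a - (q ^ a)⁻¹) from by ring,
    show q⁻¹ - q = -(q - q⁻¹) from by ring, neg_div_neg_eq]

lemma qNum_neg (q a : ℝ) : qNum q (-a) = -qNum q a := by
  unfold qNum; rw [neg_neg]; ring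

/-- Particle-hole symmetry of the ASIP rates: with `c_j^+` and `c_{j+1}^-` the ASIP
jump rates, replacing each `n_i` by `−n_i − k_i` turns `c_j^+` at `q` into
`c_{j+1}^-` at `q⁻¹`: `c_j^+(q, −η − k) = c_{j+1}^-(q^{-1}, η)`. -/
theorem asip_particle_hole_symmetry (q kj kj1 : ℝ) (nj nj1 : ℕ)
    (hq : 0 < q) (hq1 : q ≠ 1) (hkj : 0 < kj) (hkj1 : 0 < kj1) :
    q ^ ((-(nj : ℝ) - kj) + kj - (-(nj1 : ℝ) - kj1) - 1) *
        qNum q (-(nj : ℝ) - kj) * qNum q ((-(nj1 : ℝ) - kj1) + kj1) =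
      q⁻¹ ^ (-((nj1 : ℝ) + kj1 - (nj : ℝ) - 1)) *
        qNum q⁻¹ (nj1 : ℝ) * qNum q⁻¹ ((nj : ℝ) + kj) := by
  rw [show (-(nj : ℝ) - kj) + kj - (-(nj1 : ℝ) - kj1) - 1
      = (nj1 : ℝ) + kj1 - (nj : ℝ) - 1 from by ring]
  rw [show (-(nj : ℝ) - kj) = -((nj : ℝ) + kj) from by ring,
    show ((-(nj1 : ℝ) - kj1) + kj1) = -(nj1 : ℝ) from by ring,
    qNum_neg, qNum_neg, qNum_inv _ _ hq, qNum_inv _ _ hq,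
    Real.inv_rpow hq.le, Real.rpow_neg hq.le, inv_inv]
  ring
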